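/- Let P be a finite Γ-colored poset. Then P is a Γ-colored d-complete poset if and only if P is a dominant minuscule heap. -/

import Mathlib

namespace GCP

/-- A Dynkin diagram on a finite set `Γ` of colors, encoded by the integers
`θ a b` of its generalized Cartan matrix. -/
structure DynkinDiagram (Γ : Type*) [Fintype Γ] where
  θ : Γ → Γ → ℤ
  diag : ∀ a, θ a a = 2
  offdiag_nonpos : ∀ a b, a ≠ b → θ a b ≤ 0
  zero_iff : ∀ a b, a ≠ b → (θ a b = 0 ↔ θ b a = 0)

variable {Γ : Type*} [Fintype Γ] {P : Type*} [PartialOrder P] [LocallyFiniteOrder P]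

/-- Distinct colors `a` and `b` are adjacent when `θ a b < 0`. -/
def DynkinDiagram.Adj (D : DynkinDiagram Γ) (a b : Γ) : Prop :=
  a ≠ b ∧ D.θ a b < 0

/-- Distinct colors `a` and `b` are distant when `θ a b = 0`. -/
def DynkinDiagram.Distant (D : DynkinDiagram Γ) (a b : Γ) : Prop :=
  a ≠ b ∧ D.θ a b = 0

theorem DynkinDiagram.Adj.symm {D : DynkinDiagram Γ} {a b : Γ} (h : D.Adj a b) :
    D.Adj b a :=
  ⟨h.1.symm, lt_of_le_of_ne (D.offdiag_nonpos b a h.1.symm)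
    (fun h0 => h.2.ne ((D.zero_iff a b h.1).mpr h0))⟩

/-- The simple graph underlying a Dynkin diagram, with an edge between each
pair of adjacent colors. -/
def DynkinDiagram.graph (D : DynkinDiagram Γ) : SimpleGraph Γ where
  Adj a b := D.Adj a b
  symm := ⟨fun _ _ h => DynkinDiagram.Adj.symm h⟩
  loopless := ⟨fun _ h => (h : D.Adj _ _).1 rfl⟩

/-- The Dynkin diagram is connected: any two colors are joined by a path of
adjacencies. -/
def DynkinDiagram.Connected (D : DynkinDiagram Γ) : Prop :=
  ∀ a b : Γ, Relation.ReflTransGen D.Adj a b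

/-- A poset is connected: any two elements are linked by a finite chain of
comparabilities (equivalently, the poset cannot be written as the disjoint
union of two nonempty subposets). -/
def PosetConnected (P : Type*) [PartialOrder P] : Prop :=
  ∀ x y : P, Relation.ReflTransGen (fun u v : P => u ≤ v ∨ v ≤ u) x y

/-- `x < y` are consecutive elements of the color `a`. -/
def Consecutive (κ : P → Γ) (a : Γ) (x y : P) : Prop :=
  x < y ∧ κ x = a ∧ κ y = a ∧ ∀ z ∈ Finset.Ioo x y, κ z ≠ a

/-- EC: elements with equal colors are comparable. -/
def EC (κ : P → Γ) : Prop := ∀ x y : P, κ x = κ y → x ≤ y ∨ y ≤ x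

/-- NA: neighbors (covering pairs) have adjacent colors. -/
def NA (D : DynkinDiagram Γ) (κ : P → Γ) : Prop :=
  ∀ x y : P, x ⋖ y → D.Adj (κ x) (κ y)

/-- AC: elements with adjacent colors are comparable. -/
def AC (D : DynkinDiagram Γ) (κ : P → Γ) : Prop :=
  ∀ x y : P, D.Adj (κ x) (κ y) → x ≤ y ∨ y ≤ x

/-- ICE2: the census of the open interval between consecutive elements of a
color is two. -/
def ICE2 (D : DynkinDiagram Γ) (κ : P → Γ) : Prop :=
  ∀ (a : Γ) (x y : P), Consecutive κ a x y →
    ∑ z ∈ Finset.Ioo x y, (-D.θ (κ z) a) = 2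

/-- `U(x,S)`: elements of `S` above `x` with color adjacent to that of `x`. -/
def USet (D : DynkinDiagram Γ) (κ : P → Γ) (S : Set P) (x : P) : Set P :=
  {y ∈ S | x < y ∧ D.Adj (κ y) (κ x)}

/-- `L(x,S)`: elements of `S` below `x` with color adjacent to that of `x`. -/
def LSet (D : DynkinDiagram Γ) (κ : P → Γ) (S : Set P) (x : P) : Set P :=
  {y ∈ S | y < x ∧ D.Adj (κ y) (κ x)}

/-- UCBk: for every `x` maximal among elements of its color, `U(x,P)` is
finite with census at most `k`. -/
def UCB (D : DynkinDiagram Γ) (κ : P → Γ) (k : ℕ) : Prop :=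
  ∀ x : P, (∀ y : P, κ y = κ x → ¬ x < y) →
    ∃ hfin : (USet D κ Set.univ x).Finite,
      ∑ y ∈ hfin.toFinset, (-D.θ (κ y) (κ x)) ≤ (k : ℤ)

/-- LCBk: for every `x` minimal among elements of its color, `L(x,P)` is
finite with census at most `k`. -/
def LCB (D : DynkinDiagram Γ) (κ : P → Γ) (k : ℕ) : Prop :=
  ∀ x : P, (∀ y : P, κ y = κ x → ¬ y < x) →
    ∃ hfin : (LSet D κ Set.univ x).Finite,
      ∑ y ∈ hfin.toFinset, (-D.θ (κ y) (κ x)) ≤ (k : ℤ)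

/-- The coloring properties of a Γ-colored d-complete poset (the coloring is
required to be surjective separately). -/
def DComplete (D : DynkinDiagram Γ) (κ : P → Γ) : Prop :=
  EC κ ∧ NA D κ ∧ AC D κ ∧ ICE2 D κ ∧ UCB D κ 1

/-- G1: each `P_a` and each `P_b ∪ P_c` for adjacent `b, c` is a chain. -/
def G1 (D : DynkinDiagram Γ) (κ : P → Γ) : Prop :=
  (∀ a : Γ, IsChain (· ≤ ·) {x : P | κ x = a}) ∧
    ∀ b c : Γ, D.Adj b c → IsChain (· ≤ ·) {x : P | κ x = b ∨ κ x = c}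

/-- G2: the order is the minimal partial order extending the given orders on
the chains `P_a` and `P_b ∪ P_c`; i.e. every relation `x ≤ y` lies in the
reflexive transitive closure of the relations between pairs of equal or
adjacent colors. -/
def G2 (D : DynkinDiagram Γ) (κ : P → Γ) : Prop :=
  ∀ x y : P, x ≤ y →
    Relation.ReflTransGen (fun u v : P => u ≤ v ∧ (κ u = κ v ∨ D.Adj (κ u) (κ v))) x y

/-- G3: every color set `P_a` is order-isomorphic to `ℤ`. -/
def G3 (κ : P → Γ) : Prop := ∀ a : Γ, Nonempty ({x : P | κ x = a} ≃o ℤ)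

/-- G4: for adjacent colors `a, b`, every element of color `a` has a neighbor
of color `b`. -/
def G4 (D : DynkinDiagram Γ) (κ : P → Γ) : Prop :=
  ∀ a b : Γ, D.Adj a b → ∀ x : P, κ x = a → ∃ y : P, κ y = b ∧ (x ⋖ y ∨ y ⋖ x)

/-- G5: the sum of `θ (κ z) a` over the closed interval between consecutive
elements of color `a` is two. -/
def G5 (D : DynkinDiagram Γ) (κ : P → Γ) : Prop :=
  ∀ (a : Γ) (x y : P), Consecutive κ a x y →
    ∑ z ∈ Finset.Icc x y, D.θ (κ z) a = 2

/-- A full heap: a Γ-colored poset satisfying G1–G5. -/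
def FullHeap (D : DynkinDiagram Γ) (κ : P → Γ) : Prop :=
  G1 D κ ∧ G2 D κ ∧ G3 κ ∧ G4 D κ ∧ G5 D κ

/-- S1: neighbors have equal or adjacent colors and incomparable elements
have distant colors. -/
def S1 (D : DynkinDiagram Γ) (κ : P → Γ) : Prop :=
  (∀ x y : P, x ⋖ y → κ x = κ y ∨ D.Adj (κ x) (κ y)) ∧
    ∀ x y : P, ¬ x ≤ y → ¬ y ≤ x → D.Distant (κ x) (κ y)

/-- S2: the open interval between consecutive elements of color `a` contains
either exactly two elements of color adjacent to `a`, both `1`-adjacent to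
`a`, or exactly one element, whose color is `2`-adjacent to `a`. -/
def S2 (D : DynkinDiagram Γ) (κ : P → Γ) : Prop :=
  ∀ (a : Γ) (x y : P), Consecutive κ a x y →
    (∃ u ∈ Finset.Ioo x y, ∃ v ∈ Finset.Ioo x y, u ≠ v ∧
        D.θ (κ u) a = -1 ∧ D.θ (κ v) a = -1 ∧
        ∀ z ∈ Finset.Ioo x y, D.Adj (κ z) a → z = u ∨ z = v) ∨
    (∃ w : P, Finset.Ioo x y = {w} ∧ D.θ (κ w) a = -2)

/-- S3: an element maximal among elements of its color is covered by at most
one element; any such cover has color `1`-adjacent to it and is maximal among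
elements of its own color. -/
def S3 (D : DynkinDiagram Γ) (κ : P → Γ) : Prop :=
  ∀ x : P, (∀ y : P, κ y = κ x → ¬ x < y) →
    (∀ y z : P, x ⋖ y → x ⋖ z → y = z) ∧
      ∀ y : P, x ⋖ y → D.θ (κ y) (κ x) = -1 ∧ ∀ z : P, κ z = κ y → ¬ y < z

/-- S4: the underlying simple graph of the Dynkin diagram is acyclic. -/
def S4 (D : DynkinDiagram Γ) : Prop := D.graph.IsAcyclic

/-- The coloring properties of a dominant minuscule heap (the poset is
additionally required to be finite, and the coloring surjective). -/
def DominantMinusculeHeapProps (D : DynkinDiagram Γ) (κ : P → Γ) : Prop :=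
  S1 D κ ∧ S2 D κ ∧ S3 D κ ∧ S4 D

/-- The color set `P_b` is bounded above in `P`. -/
def ColorBddAbove (κ : P → Γ) (b : Γ) : Prop := ∃ u : P, ∀ x : P, κ x = b → x ≤ u

/-- The color set `P_b` is bounded below in `P`. -/
def ColorBddBelow (κ : P → Γ) (b : Γ) : Prop := ∃ l : P, ∀ x : P, κ x = b → l ≤ x

/-!
S1 is EC + NA + AC, and S2 is ICE2 (given NA), once one notes that only elements whose colors are
adjacent to `a` contribute to the census, each contributing at least one. The content lies in S4
and UCB1. If UCB1 holds, let `m a` be the top element of color `a`: on a cycle of the Dynkin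
diagram, the color `a` minimizing `m a` has two neighbours `b ≠ d` on the cycle, and `m b`, `m d`
both lie in `U(m a)`, which has at most one element. Conversely, under S3 the covers climbing from a
top element `x` to some `y ∈ U(x)` pass only through top elements whose successive colors are
adjacent, which gives a path from `κ x` to `κ y` in the diagram; by S4 it is the edge itself, so
`y` covers `x`, and S3 bounds `U(x)`.
-/

theorem _root_.Finset.sum_le_one_iff_of_one_le {α : Type*} {s : Finset α} {f : α → ℤ}
    (hf : ∀ y ∈ s, 1 ≤ f y) :
    ∑ y ∈ s, f y ≤ 1 ↔ ∀ y ∈ s, (∀ z ∈ s, z = y) ∧ f y = 1 := by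
  constructor
  · intro h y hy
    have hcard : s.card ≤ 1 := by
      have := Finset.card_nsmul_le_sum s f 1 hf
      simp only [nsmul_eq_mul, mul_one] at this
      exact_mod_cast this.trans h
    have hs : ∀ z ∈ s, z = y := fun z hz => Finset.card_le_one.mp hcard z hz y hy
    rw [Finset.eq_singleton_iff_unique_mem.mpr ⟨hy, hs⟩, Finset.sum_singleton] at h
    exact ⟨hs, le_antisymm h (hf y hy)⟩
  · intro h
    obtain rfl | ⟨y, hy⟩ := s.eq_empty_or_nonempty
    · simp
    · rw [Finset.eq_singleton_iff_unique_mem.mpr ⟨hy, (h y hy).1⟩, Finset.sum_singleton]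
      exact (h y hy).2.le

theorem _root_.Finset.eq_pair_or_eq_singleton_of_one_le_of_sum_eq_two {α : Type*}
    [DecidableEq α] {s : Finset α} {f : α → ℤ} (hf : ∀ y ∈ s, 1 ≤ f y) (h : ∑ y ∈ s, f y = 2) :
    (∃ u v, u ≠ v ∧ s = {u, v} ∧ f u = 1 ∧ f v = 1) ∨ ∃ w, s = {w} ∧ f w = 2 := by
  have hcard : s.card ≤ 2 := by
    have := Finset.card_nsmul_le_sum s f 1 hf
    simp only [nsmul_eq_mul, mul_one, h] at this
    exact_mod_cast this
  have hne : s.card ≠ 0 := fun h0 => by simp [Finset.card_eq_zero.mp h0] at h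
  obtain h1 | h2 : s.card = 1 ∨ s.card = 2 := by omega
  · obtain ⟨w, rfl⟩ := Finset.card_eq_one.mp h1
    exact .inr ⟨w, rfl, by simpa using h⟩
  · obtain ⟨u, v, huv, rfl⟩ := Finset.card_eq_two.mp h2
    rw [Finset.sum_pair huv] at h
    have hu := hf u (by simp)
    have hv := hf v (by simp)
    exact .inl ⟨u, v, huv, rfl, by omega, by omega⟩

/-- A vertex of a cycle minimizing `f` would have two distinct neighbours on the cycle, both with
larger value. -/
theorem _root_.SimpleGraph.isAcyclic_of_forall_adj_lt {V α : Type*} [PartialOrder α]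
    {G : SimpleGraph V}
    (f : V → α) (hcomp : ∀ ⦃a b⦄, G.Adj a b → f a < f b ∨ f b < f a)
    (hup : ∀ ⦃a b c⦄, G.Adj a b → G.Adj a c → f a < f b → f a < f c → b = c) :
    G.IsAcyclic := by
  classical
  intro v c hc
  obtain ⟨a, ha, hmin⟩ := c.support.toFinset.exists_minimalFor f ⟨v, by simp⟩
  rw [List.mem_toFinset] at ha
  have hc' := hc.rotate ha
  have hmem : ∀ i, (c.rotate a ha).getVert i ∈ c.support := fun i =>
    (SimpleGraph.Walk.mem_support_rotate_iff _ _ _).mp (SimpleGraph.Walk.getVert_mem_support _ i)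
  have hlt : ∀ b ∈ c.support, G.Adj a b → f a < f b := fun b hb hab =>
    (hcomp hab).resolve_right fun hba =>
      hba.not_ge (hmin (List.mem_toFinset.mpr hb) hba.le)
  refine hc'.snd_ne_penultimate (hup (SimpleGraph.Walk.adj_snd hc'.not_nil)
    (SimpleGraph.Walk.adj_penultimate hc'.not_nil).symm ?_ ?_)
  · exact hlt _ (hmem 1) (SimpleGraph.Walk.adj_snd hc'.not_nil)
  · exact hlt _ (hmem _) (SimpleGraph.Walk.adj_penultimate hc'.not_nil).symm

namespace DynkinDiagram

variable {D : DynkinDiagram Γ} {a b : Γ}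

theorem adj_iff_θ_neg : D.Adj a b ↔ D.θ a b < 0 :=
  ⟨And.right, fun h => ⟨fun hab => by rw [hab, D.diag] at h; omega, h⟩⟩

theorem θ_eq_zero_of_not_adj (hab : a ≠ b) (h : ¬ D.Adj a b) : D.θ a b = 0 :=
  le_antisymm (D.offdiag_nonpos a b hab) (not_lt.mp (h ⟨hab, ·⟩))

end DynkinDiagram

section ColoredPoset

set_option linter.unusedSectionVars false

variable {D : DynkinDiagram Γ} {κ : P → Γ}

open scoped Classical in
noncomputable def adjIoo (D : DynkinDiagram Γ) (κ : P → Γ) (a : Γ) (x y : P) : Finset P :=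
  (Finset.Ioo x y).filter fun z => D.Adj (κ z) a

theorem mem_adjIoo {a : Γ} {x y z : P} :
    z ∈ adjIoo D κ a x y ↔ z ∈ Finset.Ioo x y ∧ D.Adj (κ z) a := by
  classical
  exact Finset.mem_filter

def ColorMaximal (κ : P → Γ) (x : P) : Prop := ∀ y, κ y = κ x → ¬ x < y

theorem exists_colorMaximal [Finite P] (hsurj : Function.Surjective κ) (a : Γ) :
    ∃ x, κ x = a ∧ ColorMaximal κ x := by
  obtain ⟨x, hx⟩ := (Set.toFinite {x | κ x = a}).exists_maximal (hsurj a)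
  exact ⟨x, hx.prop, fun y hy hxy => hx.not_gt (hy.trans hx.prop) hxy⟩

theorem s1_of_ec_of_na_of_ac (hEC : EC κ) (hNA : NA D κ) (hAC : AC D κ) : S1 D κ := by
  refine ⟨fun x y h => .inr (hNA x y h), fun x y hxy hyx => ?_⟩
  have hne : κ x ≠ κ y := fun h => (hEC x y h).elim hxy hyx
  exact ⟨hne, D.θ_eq_zero_of_not_adj hne fun h => (hAC x y h).elim hxy hyx⟩

theorem S1.ec (hS1 : S1 D κ) : EC κ := fun x y h => by
  by_contra! hc
  exact (hS1.2 x y hc.1 hc.2).1 h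

theorem S1.ac (hS1 : S1 D κ) : AC D κ := fun x y h => by
  by_contra! hc
  exact h.2.ne (hS1.2 x y hc.1 hc.2).2

theorem sum_Ioo_eq_sum_adjIoo {a : Γ} {x y : P} (hxy : Consecutive κ a x y) :
    ∑ z ∈ Finset.Ioo x y, -D.θ (κ z) a =
      ∑ z ∈ adjIoo D κ a x y, -D.θ (κ z) a := by
  classical
  refine (Finset.sum_filter_of_ne fun z hz hθ => ?_).symm
  by_contra h
  exact hθ (by rw [D.θ_eq_zero_of_not_adj (hxy.2.2.2 z hz) h, neg_zero])

theorem Ioo_eq_singleton_of_adjIoo_eq_singleton (hNA : NA D κ) {a : Γ} {x y w : P}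
    (hx : κ x = a) (hy : κ y = a) (hw : adjIoo D κ a x y = {w}) :
    Finset.Ioo x y = {w} := by
  have hmem : ∀ z, z ∈ Finset.Ioo x y → D.Adj (κ z) a → z = w := fun z hz hza => by
    simpa [hw] using mem_adjIoo.mpr ⟨hz, hza⟩
  have hwA : w ∈ adjIoo D κ a x y := hw ▸ Finset.mem_singleton_self w
  refine Finset.eq_singleton_iff_unique_mem.mpr ⟨(mem_adjIoo.mp hwA).1, ?_⟩
  intro z hz
  obtain ⟨hxz, hzy⟩ := Finset.mem_Ioo.mp hz
  obtain ⟨w₁, hxw₁, hw₁z⟩ := exists_covBy_le_of_lt hxz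
  obtain ⟨w₂, hzw₂, hw₂y⟩ := exists_le_covBy_of_lt hzy
  have h₁ := hmem w₁ (Finset.mem_Ioo.mpr ⟨hxw₁.lt, hw₁z.trans_lt hzy⟩)
    (hx ▸ (hNA x w₁ hxw₁).symm)
  have h₂ := hmem w₂ (Finset.mem_Ioo.mpr ⟨hxz.trans_le hzw₂, hw₂y.lt⟩) (hy ▸ hNA w₂ y hw₂y)
  exact le_antisymm (h₂ ▸ hzw₂) (h₁ ▸ hw₁z)

theorem s2_of_na_of_ice2 (hNA : NA D κ) (hICE : ICE2 D κ) : S2 D κ := by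
  classical
  intro a x y hxy
  have hsum := (sum_Ioo_eq_sum_adjIoo hxy).symm.trans (hICE a x y hxy)
  have hone : ∀ z ∈ adjIoo D κ a x y, 1 ≤ -D.θ (κ z) a :=
    fun z hz => by have := (mem_adjIoo.mp hz).2.2; omega
  rcases Finset.eq_pair_or_eq_singleton_of_one_le_of_sum_eq_two hone hsum with
    ⟨u, v, huv, hA, hu, hv⟩ | ⟨w, hA, hw⟩
  · have hmem : ∀ z, z ∈ adjIoo D κ a x y ↔ z = u ∨ z = v :=
      fun z => by rw [hA]; simp
    refine .inl ⟨u, (mem_adjIoo.mp ((hmem u).mpr (.inl rfl))).1, v,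
      (mem_adjIoo.mp ((hmem v).mpr (.inr rfl))).1, huv, by omega, by omega,
      fun z hz hza => (hmem z).mp (mem_adjIoo.mpr ⟨hz, hza⟩)⟩
  · exact .inr
      ⟨w, Ioo_eq_singleton_of_adjIoo_eq_singleton hNA hxy.2.1 hxy.2.2.1 hA, by omega⟩

theorem S2.ice2 (hS2 : S2 D κ) : ICE2 D κ := by
  classical
  intro a x y hxy
  rcases hS2 a x y hxy with ⟨u, hu, v, hv, huv, hθu, hθv, huniq⟩ | ⟨w, hw, hθw⟩
  · have hA : adjIoo D κ a x y = {u, v} := by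
      ext z
      simp only [mem_adjIoo, Finset.mem_insert, Finset.mem_singleton]
      refine ⟨fun ⟨hz, hza⟩ => huniq z hz hza, ?_⟩
      rintro (rfl | rfl)
      · exact ⟨hu, DynkinDiagram.adj_iff_θ_neg.mpr (by omega)⟩
      · exact ⟨hv, DynkinDiagram.adj_iff_θ_neg.mpr (by omega)⟩
    rw [sum_Ioo_eq_sum_adjIoo hxy, hA, Finset.sum_pair huv, hθu, hθv]
    rfl
  · rw [hw, Finset.sum_singleton, hθw]
    rfl

theorem S2.na (hS2 : S2 D κ) (hS1 : S1 D κ) : NA D κ := by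
  intro x y hxy
  refine (hS1.1 x y hxy).resolve_left fun hcol => ?_
  have hempty : ∀ z ∈ Finset.Ioo x y, False := fun z hz =>
    hxy.2 (Finset.mem_Ioo.mp hz).1 (Finset.mem_Ioo.mp hz).2
  rcases hS2 (κ x) x y ⟨hxy.lt, rfl, hcol.symm, fun z hz => (hempty z hz).elim⟩ with
    ⟨u, hu, -⟩ | ⟨w, hw, -⟩
  · exact hempty u hu
  · exact hempty w (hw ▸ Finset.mem_singleton_self w)

theorem ucb_one_iff [Finite P] :
    UCB D κ 1 ↔ ∀ x, ColorMaximal κ x → ∀ y ∈ USet D κ Set.univ x,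
      (∀ z ∈ USet D κ Set.univ x, z = y) ∧ D.θ (κ y) (κ x) = -1 := by
  refine forall₂_congr fun x _ => ?_
  have hone : ∀ y ∈ (Set.toFinite (USet D κ Set.univ x)).toFinset, 1 ≤ -D.θ (κ y) (κ x) :=
    fun y hy => by have := ((Set.Finite.mem_toFinset _).mp hy).2.2.2; omega
  rw [exists_prop_of_true (Set.toFinite _), Nat.cast_one, Finset.sum_le_one_iff_of_one_le hone]
  simp only [Set.Finite.mem_toFinset, neg_eq_iff_eq_neg]

theorem s3_of_na_of_ucb [Finite P] (hNA : NA D κ) (hUCB : UCB D κ 1) : S3 D κ := by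
  intro x hx
  have hU := ucb_one_iff.mp hUCB x hx
  have hcov : ∀ y, x ⋖ y → y ∈ USet D κ Set.univ x := fun y hy =>
    ⟨trivial, hy.lt, (hNA x y hy).symm⟩
  refine ⟨fun y z hy hz => (hU z (hcov z hz)).1 y (hcov y hy),
    fun y hy => ⟨(hU y (hcov y hy)).2, ?_⟩⟩
  intro z hz hyz
  have hzU : z ∈ USet D κ Set.univ x := ⟨trivial, hy.lt.trans hyz, hz ▸ (hNA x y hy).symm⟩
  exact hyz.ne ((hU y (hcov y hy)).1 z hzU).symm

theorem s4_of_ac_of_ucb [Finite P] (hsurj : Function.Surjective κ) (hAC : AC D κ)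
    (hUCB : UCB D κ 1) : S4 D := by
  choose m hmκ hm using exists_colorMaximal hsurj
  have hU := ucb_one_iff.mp hUCB
  refine SimpleGraph.isAcyclic_of_forall_adj_lt m (fun a b hab => ?_)
    (fun a b c hab hac hb hc => ?_)
  · have hne : m a ≠ m b := fun h => hab.1 (by rw [← hmκ a, h, hmκ b])
    rcases hAC (m a) (m b) (by rwa [hmκ, hmκ]) with h | h
    · exact .inl (h.lt_of_ne hne)
    · exact .inr (h.lt_of_ne hne.symm)
  · have hbU : m b ∈ USet D κ Set.univ (m a) :=
      ⟨trivial, hb, by rw [hmκ, hmκ]; exact hab.symm⟩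
    have hcU : m c ∈ USet D κ Set.univ (m a) :=
      ⟨trivial, hc, by rw [hmκ, hmκ]; exact hac.symm⟩
    rw [← hmκ b, ← hmκ c, (hU (m a) (hm a) _ hcU).1 _ hbU]

theorem exists_isPath_of_colorMaximal_of_lt [Finite P] (hS3 : S3 D κ) {x z : P}
    (hx : ColorMaximal κ x) (hxz : x < z) :
    ∃ p : D.graph.Walk (κ x) (κ z), p.IsPath ∧ (x ⋖ z ∨ 2 ≤ p.length) ∧
      ∀ c ∈ p.support, ∃ w, x ≤ w ∧ κ w = c := by
  induction x using WellFoundedGT.induction with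
  | _ x ih =>
  obtain ⟨y, hxy, hyz⟩ := exists_covBy_le_of_lt hxz
  obtain ⟨hθ, hy⟩ := (hS3 x hx).2 y hxy
  have hedge : D.graph.Adj (κ x) (κ y) := (DynkinDiagram.adj_iff_θ_neg.mpr (by omega)).symm
  rcases hyz.eq_or_lt with rfl | hyz
  · refine ⟨.cons hedge .nil, by simpa using hedge.ne, .inl hxy, ?_⟩
    simp only [SimpleGraph.Walk.support_cons, SimpleGraph.Walk.support_nil, List.mem_cons,
      List.not_mem_nil, or_false]
    rintro c (rfl | rfl)
    exacts [⟨x, le_rfl, rfl⟩, ⟨y, hxy.le, rfl⟩]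
  obtain ⟨p, hp, -, hsupp⟩ := ih y hxy.lt hy hyz
  have hxp : κ x ∉ p.support := fun h => by
    obtain ⟨w, hyw, hw⟩ := hsupp _ h
    exact hx w hw (hxy.lt.trans_le hyw)
  have hlen : p.length ≠ 0 := fun h => hy z (SimpleGraph.Walk.eq_of_length_eq_zero h).symm hyz
  refine ⟨.cons hedge p, hp.cons hxp,
    .inr (by simp only [SimpleGraph.Walk.length_cons]; omega), ?_⟩
  simp only [SimpleGraph.Walk.support_cons, List.mem_cons]
  rintro c (rfl | hc)
  · exact ⟨x, le_rfl, rfl⟩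
  · obtain ⟨w, hyw, hw⟩ := hsupp c hc
    exact ⟨w, hxy.le.trans hyw, hw⟩

theorem S3.covBy_of_mem_uSet [Finite P] (hS3 : S3 D κ) (hS4 : S4 D) {x y : P}
    (hx : ColorMaximal κ x) (hy : y ∈ USet D κ Set.univ x) : x ⋖ y := by
  obtain ⟨p, hp, hcov | hlen, -⟩ := exists_isPath_of_colorMaximal_of_lt hS3 hx hy.2.1
  · exact hcov
  · have := congrArg (fun q : D.graph.Path _ _ => q.1.length) ((hS4.subsingleton_path _ _).elim
      ⟨p, hp⟩ (SimpleGraph.Path.singleton (hy.2.2.symm : D.graph.Adj _ _)))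
    change p.length = 1 at this
    omega

theorem S3.ucb_one [Finite P] (hS3 : S3 D κ) (hS4 : S4 D) : UCB D κ 1 := by
  refine ucb_one_iff.mpr fun x hx y hy => ?_
  have hxy := hS3.covBy_of_mem_uSet hS4 hx hy
  exact ⟨fun z hz => (hS3 x hx).1 z y (hS3.covBy_of_mem_uSet hS4 hx hz) hxy,
    ((hS3 x hx).2 y hxy).1⟩

end ColoredPoset

/-- a finite Γ-colored poset is Γ-colored d-complete iff it is a
dominant minuscule heap. -/
theorem statement6 [Finite P] (D : DynkinDiagram Γ) (κ : P → Γ)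
    (hsurj : Function.Surjective κ) :
    DComplete D κ ↔ DominantMinusculeHeapProps D κ := by
  constructor
  · rintro ⟨hEC, hNA, hAC, hICE, hUCB⟩
    exact ⟨s1_of_ec_of_na_of_ac hEC hNA hAC, s2_of_na_of_ice2 hNA hICE,
      s3_of_na_of_ucb hNA hUCB, s4_of_ac_of_ucb hsurj hAC hUCB⟩
  · rintro ⟨hS1, hS2, hS3, hS4⟩
    exact ⟨hS1.ec, hS2.na hS1, hS1.ac, hS2.ice2, hS3.ucb_one hS4⟩

end GCP
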